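/- arXiv:1812.03418 — 2 statements merged into one kernel-verified Lean document; each statement's English description precedes it below -/
import Mathlib

section
/- Let σ be a nonnegative locally finite Borel measure on ℝⁿ, 1 < p < ∞, and 0 < α < n/p. Define the Wolff potential W_{α,p}σ(x) = ∫₀^∞ (σ(B(x,ρ))/ρ^{n-αp})^{1/(p-1)} dρ/ρ. Then for every x ∈ ℝⁿ, W_{α,p}σ(x) ≤ 2^{(n-αp)/(p-1)} · sup{W_{α,p}σ(y) : y ∈ supp(σ)}. -/
open MeasureTheory Metric Set
open scoped ENNReal

/-!
The support of `σ` is closed and carries all of `σ`. If `x₀` is a point of the support nearest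
to `x`, every point of the support in `B(x, ρ)` lies in `B(x₀, 2ρ)`, hence
`σ(B(x, ρ)) ≤ σ(B(x₀, 2ρ))`. Since `dρ/ρ` is invariant under `ρ ↦ 2ρ`, integrating this bound
gives `W_{α,p}σ(x) ≤ 2^{(n-αp)/(p-1)} W_{α,p}σ(x₀)`.
-/

/-- The Wolff potential `W_{α,p}σ(x) = ∫₀^∞ (σ(B(x,ρ))/ρ^{n-αp})^{1/(p-1)} dρ/ρ`. -/
noncomputable def wolffPotential (n : ℕ) (α p : ℝ)
    (σ : Measure (EuclideanSpace ℝ (Fin n))) (x : EuclideanSpace ℝ (Fin n)) : ℝ≥0∞ :=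
  ∫⁻ ρ in Set.Ioi (0 : ℝ),
    (σ (Metric.ball x ρ) / ENNReal.ofReal (ρ ^ ((n : ℝ) - α * p))) ^ (1 / (p - 1)) *
      ENNReal.ofReal (1 / ρ)

namespace MeasureTheory.Measure

variable {X : Type*} [PseudoMetricSpace X] [MeasurableSpace X] {μ : Measure X}

lemma mem_support_iff_forall_measure_ball_pos {x : X} :
    x ∈ μ.support ↔ ∀ ε > 0, 0 < μ (ball x ε) :=
  nhds_basis_ball.mem_measureSupport

lemma exists_mem_support_measure_ball_le [ProperSpace X] (hμ : μ ≠ 0) (x : X) :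
    ∃ x₀ ∈ μ.support, ∀ ρ, μ (ball x ρ) ≤ μ (ball x₀ (2 * ρ)) := by
  obtain ⟨x₀, hx₀, hdist⟩ := isClosed_support.exists_infDist_eq_dist (nonempty_support hμ) x
  refine ⟨x₀, hx₀, fun ρ => ?_⟩
  have hsub : ball x ρ ∩ μ.support ⊆ ball x₀ (2 * ρ) := by
    rintro z ⟨hz, hzμ⟩
    have hx₀z : dist x x₀ ≤ dist x z := hdist ▸ infDist_le_dist_of_mem hzμ
    rw [mem_ball] at hz ⊢
    linarith [dist_triangle z x x₀, dist_comm x z]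
  calc μ (ball x ρ) = μ (ball x ρ ∩ μ.support) :=
        (measure_inter_conull measure_compl_support).symm
    _ ≤ μ (ball x₀ (2 * ρ)) := measure_mono hsub

end MeasureTheory.Measure

lemma lintegral_Ioi_comp_mul_left_mul_ofReal_inv (h : ℝ → ℝ≥0∞) {c : ℝ} (hc : 0 < c) :
    ∫⁻ ρ in Ioi 0, h (c * ρ) * ENNReal.ofReal (1 / ρ) =
      ∫⁻ ρ in Ioi 0, h ρ * ENNReal.ofReal (1 / ρ) := by
  conv_rhs => rw [← image_const_mul_Ioi_zero hc]
  rw [lintegral_image_eq_lintegral_abs_deriv_mul measurableSet_Ioi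
    (fun ρ _ => (hasDerivAt_const_mul c).hasDerivWithinAt) (mul_right_injective₀ hc.ne').injOn]
  refine setLIntegral_congr_fun measurableSet_Ioi fun ρ (hρ : 0 < ρ) => ?_
  rw [abs_of_pos hc, mul_left_comm, ← ENNReal.ofReal_mul hc.le]
  congr 2
  field_simp

lemma ENNReal.div_ofReal_rpow_eq_mul_div_ofReal_mul_rpow (m : ℝ≥0∞) {c ρ : ℝ} (hc : 0 < c)
    (hρ : 0 < ρ) (t : ℝ) :
    m / ENNReal.ofReal (ρ ^ t) = ENNReal.ofReal (c ^ t) * (m / ENNReal.ofReal ((c * ρ) ^ t)) := by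
  have hct : 0 < c ^ t := Real.rpow_pos_of_pos hc t
  rw [Real.mul_rpow hc.le hρ.le, ENNReal.ofReal_mul hct.le, ← mul_div_assoc,
    ENNReal.mul_div_mul_left _ _ (ENNReal.ofReal_pos.2 hct).ne' ENNReal.ofReal_ne_top]

section wolffPotential

variable {n : ℕ} {α p : ℝ} {σ : Measure (EuclideanSpace ℝ (Fin n))}

lemma wolffPotential_zero_measure (hp : 1 < p) (x : EuclideanSpace ℝ (Fin n)) :
    wolffPotential n α p 0 x = 0 := by
  simp [wolffPotential, ENNReal.zero_rpow_of_pos (inv_pos.2 (sub_pos.2 hp))]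

lemma wolffPotential_le_of_measure_ball_le (hp : 1 ≤ p) {c : ℝ} (hc : 0 < c)
    {x x₀ : EuclideanSpace ℝ (Fin n)} (hball : ∀ ρ, σ (ball x ρ) ≤ σ (ball x₀ (c * ρ))) :
    wolffPotential n α p σ x ≤
      ENNReal.ofReal (c ^ (((n : ℝ) - α * p) / (p - 1))) * wolffPotential n α p σ x₀ := by
  set t : ℝ := (n : ℝ) - α * p
  set q : ℝ := 1 / (p - 1)
  have hq : 0 ≤ q := one_div_nonneg.2 (sub_nonneg.2 hp)
  have hpointwise : ∀ ρ ∈ Ioi (0 : ℝ), (σ (ball x ρ) / ENNReal.ofReal (ρ ^ t)) ^ q ≤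
      ENNReal.ofReal (c ^ (t / (p - 1))) *
        (σ (ball x₀ (c * ρ)) / ENNReal.ofReal ((c * ρ) ^ t)) ^ q := by
    intro ρ hρ
    rw [div_eq_mul_one_div t, Real.rpow_mul hc.le,
      ← ENNReal.ofReal_rpow_of_pos (Real.rpow_pos_of_pos hc t), ← ENNReal.mul_rpow_of_nonneg _ _ hq,
      ← ENNReal.div_ofReal_rpow_eq_mul_div_ofReal_mul_rpow _ hc hρ]
    gcongr (?_ / _) ^ _
    exact hball ρ
  calc wolffPotential n α p σ x
      ≤ ∫⁻ ρ in Ioi 0, ENNReal.ofReal (c ^ (t / (p - 1))) *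
          ((σ (ball x₀ (c * ρ)) / ENNReal.ofReal ((c * ρ) ^ t)) ^ q * ENNReal.ofReal (1 / ρ)) :=
        setLIntegral_mono' measurableSet_Ioi fun ρ hρ => by
          rw [← mul_assoc]; gcongr; exact hpointwise ρ hρ
    _ = ENNReal.ofReal (c ^ (t / (p - 1))) * wolffPotential n α p σ x₀ := by
        rw [lintegral_const_mul' _ _ ENNReal.ofReal_ne_top,
          lintegral_Ioi_comp_mul_left_mul_ofReal_inv
            (fun s => (σ (ball x₀ s) / ENNReal.ofReal (s ^ t)) ^ q) hc]
        rfl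

end wolffPotential

theorem wolff_weak_max_principle_general (n : ℕ) (α p : ℝ) (hp : 1 < p)
    (σ : Measure (EuclideanSpace ℝ (Fin n)))
    (x : EuclideanSpace ℝ (Fin n)) :
    wolffPotential n α p σ x ≤
      ENNReal.ofReal (2 ^ (((n : ℝ) - α * p) / (p - 1))) *
        ⨆ (y : EuclideanSpace ℝ (Fin n)) (_ : ∀ ε > 0, 0 < σ (Metric.ball y ε)),
          wolffPotential n α p σ y := by
  rcases eq_or_ne σ 0 with rfl | hσ
  · simp [wolffPotential_zero_measure hp]
  obtain ⟨x₀, hx₀, hball⟩ := Measure.exists_mem_support_measure_ball_le hσ x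
  calc wolffPotential n α p σ x
      ≤ ENNReal.ofReal (2 ^ (((n : ℝ) - α * p) / (p - 1))) * wolffPotential n α p σ x₀ :=
        wolffPotential_le_of_measure_ball_le hp.le two_pos hball
    _ ≤ _ := by
        gcongr
        exact le_iSup₂ (f := fun y (_ : ∀ ε > 0, 0 < σ (ball y ε)) => wolffPotential n α p σ y)
          x₀ (Measure.mem_support_iff_forall_measure_ball_pos.1 hx₀)

/-- Weak maximum principle for Wolff potentials:
`W_{α,p}σ(x) ≤ 2^{(n-αp)/(p-1)} sup {W_{α,p}σ(y) : y ∈ supp σ}`. -/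
theorem wolff_weak_max_principle (n : ℕ) (α p : ℝ) (hp : 1 < p)
    (hα : 0 < α) (hαn : α < (n : ℝ) / p)
    (σ : Measure (EuclideanSpace ℝ (Fin n))) [IsLocallyFiniteMeasure σ]
    (x : EuclideanSpace ℝ (Fin n)) :
    wolffPotential n α p σ x ≤
      ENNReal.ofReal (2 ^ (((n : ℝ) - α * p) / (p - 1))) *
        ⨆ (y : EuclideanSpace ℝ (Fin n)) (_ : ∀ ε > 0, 0 < σ (Metric.ball y ε)),
          wolffPotential n α p σ y :=
  wolff_weak_max_principle_general n α p hp σ x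
end

section
/- Let σ be a locally finite Borel measure on ℝⁿ, let D be the set of dyadic cubes Q with σ(Q) > 0, let 0 < q < r, with r ≥ 1, let (λ_Q)_{Q∈D} be a finitely supported family of nonnegative reals. Then Σ_{R∈D} λ_R σ(R) ( (1/σ(R)) ∫_R (Σ_{Q⊆R} λ_Q χ_Q)^q dσ )^{(r-1)/q} ≤ C(r,q) ∫_{ℝⁿ} (Σ_{Q∈D} λ_Q χ_Q)^r dσ, where C(r,q) depends only on r and q. -/
open MeasureTheory Set
open scoped ENNReal

/-- A dyadic cube in `ℝⁿ`, given by a generation `k : ℤ` and a corner index `m : Fin n → ℤ`. -/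
structure DyadicCube (n : ℕ) where
  k : ℤ
  m : Fin n → ℤ

/-- The set of points of a dyadic cube: `∏ᵢ [mᵢ 2^{-k}, (mᵢ+1) 2^{-k})`. -/
def DyadicCube.toSet {n : ℕ} (Q : DyadicCube n) : Set (Fin n → ℝ) :=
  {x | ∀ i, (Q.m i : ℝ) * (2 : ℝ) ^ (-Q.k) ≤ x i ∧ x i < ((Q.m i : ℝ) + 1) * (2 : ℝ) ^ (-Q.k)}

/-- `Σ_{Q} λ_Q χ_Q(x)`. -/
noncomputable def dSum {n : ℕ} (lam : DyadicCube n → ℝ≥0∞) (x : Fin n → ℝ) : ℝ≥0∞ :=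
  ∑' Q : DyadicCube n, Set.indicator Q.toSet (fun _ => lam Q) x

/-- `Σ_{Q ⊆ R} λ_Q χ_Q(x)`. -/
noncomputable def dSumIn {n : ℕ} (lam : DyadicCube n → ℝ≥0∞) (R : DyadicCube n)
    (x : Fin n → ℝ) : ℝ≥0∞ :=
  ∑' Q : {Q : DyadicCube n // Q.toSet ⊆ R.toSet}, Set.indicator Q.1.toSet (fun _ => lam Q.1) x

/-!
For `x ∈ R` the `q`-average over `R` of `Σ_{Q ⊆ R} λ_Q χ_Q` is at most `M φ (x)`, where
`φ = (Σ_Q λ_Q χ_Q) ^ q` and `M` is the maximal average over the cubes carrying `λ`. So the left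
side is at most `∫ (Σ_Q λ_Q χ_Q) (M φ) ^ ((r - 1) / q) dσ`, which is the right side when `r = 1`;
when `r > 1` Hölder reduces it to the `L ^ (r / q)` bound for `M`. That bound is Doob's
inequality: since dyadic cubes are nested or disjoint, `t σ {M φ ≥ t} ≤ ∫_{M φ ≥ t} φ dσ`, the
layer cake formula turns this into `∫ (M φ) ^ p ≤ p / (p - 1) ∫ φ (M φ) ^ (p - 1)`, and Hölder
absorbs the last factor.
-/

lemma floor_mul_two_zpow_of_le (y : ℝ) {k' k : ℤ} (h : k' ≤ k) :
    ⌊y * 2 ^ k'⌋ = ⌊y * 2 ^ k⌋ / 2 ^ (k - k').toNat := by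
  have hd : ((2 ^ (k - k').toNat : ℕ) : ℝ) = 2 ^ (k - k') := by
    rw [Nat.cast_pow, Nat.cast_ofNat, ← zpow_natCast, Int.toNat_of_nonneg (by omega)]
  have hy : y * 2 ^ k' = y * 2 ^ k / ((2 ^ (k - k').toNat : ℕ) : ℝ) := by
    rw [hd, mul_div_assoc, ← zpow_sub₀ two_ne_zero, sub_sub_cancel]
  rw [hy, Int.floor_div_natCast]
  push_cast
  rfl

namespace DyadicCube

variable {n : ℕ}

instance : Countable (DyadicCube n) :=
  Function.Injective.countable (f := fun Q : DyadicCube n => (Q.k, Q.m)) fun Q R h => by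
    cases Q; cases R; cases h; rfl

lemma mem_toSet_iff_floor (Q : DyadicCube n) (x : Fin n → ℝ) :
    x ∈ Q.toSet ↔ ∀ i, ⌊x i * 2 ^ Q.k⌋ = Q.m i := by
  have h2 : (0 : ℝ) < 2 ^ Q.k := zpow_pos two_pos _
  refine forall_congr' fun i => ?_
  rw [Int.floor_eq_iff, zpow_neg, mul_inv_le_iff₀ h2, ← div_eq_mul_inv, lt_div_iff₀ h2]

lemma toSet_subset_of_le_of_mem {Q R : DyadicCube n} (hk : R.k ≤ Q.k) {y : Fin n → ℝ}
    (hyQ : y ∈ Q.toSet) (hyR : y ∈ R.toSet) : Q.toSet ⊆ R.toSet := by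
  intro x hx
  rw [mem_toSet_iff_floor] at hx hyQ hyR ⊢
  intro i
  rw [← hyR i, floor_mul_two_zpow_of_le _ hk, floor_mul_two_zpow_of_le _ hk, hx i, hyQ i]

lemma subset_or_subset_or_disjoint (Q R : DyadicCube n) :
    Q.toSet ⊆ R.toSet ∨ R.toSet ⊆ Q.toSet ∨ Disjoint Q.toSet R.toSet := by
  by_cases h : Disjoint Q.toSet R.toSet
  · exact Or.inr (Or.inr h)
  obtain ⟨y, hyQ, hyR⟩ := Set.not_disjoint_iff.1 h
  rcases le_total R.k Q.k with hk | hk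
  · exact Or.inl (toSet_subset_of_le_of_mem hk hyQ hyR)
  · exact Or.inr (Or.inl (toSet_subset_of_le_of_mem hk hyR hyQ))

lemma toSet_eq_pi (Q : DyadicCube n) :
    Q.toSet = Set.univ.pi fun i => Ico ((Q.m i : ℝ) * 2 ^ (-Q.k)) ((Q.m i + 1) * 2 ^ (-Q.k)) := by
  ext x
  simp [toSet]

lemma measurableSet_toSet (Q : DyadicCube n) : MeasurableSet Q.toSet := by
  rw [toSet_eq_pi]
  exact MeasurableSet.univ_pi fun _ => measurableSet_Ico

lemma measure_toSet_lt_top (σ : Measure (Fin n → ℝ)) [IsLocallyFiniteMeasure σ]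
    (Q : DyadicCube n) : σ Q.toSet < ⊤ := by
  refine (measure_mono fun x hx => ?_).trans_lt
    (isCompact_Icc (a := fun i => (Q.m i : ℝ) * 2 ^ (-Q.k))
      (b := fun i => ((Q.m i : ℝ) + 1) * 2 ^ (-Q.k))).measure_lt_top
  exact ⟨fun i => (hx i).1, fun i => (hx i).2.le⟩

end DyadicCube

section LayerCake

variable {α : Type*} [MeasurableSpace α] {μ : Measure α}

/-- Integrate the weak-type estimate against `t ^ (p - 2) dt` and use the layer cake formula on
both sides. -/
lemma lintegral_rpow_le_mul_lintegral_mul_rpow_sub_one {f φ : α → ℝ≥0∞} (hf : Measurable f)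
    (hφ : Measurable φ) (hf_top : ∀ x, f x ≠ ⊤) {p : ℝ} (hp : 1 < p)
    (hweak : ∀ t, t * μ {x | t ≤ f x} ≤ ∫⁻ x in {x | t ≤ f x}, φ x ∂μ) :
    ∫⁻ x, f x ^ p ∂μ ≤ ENNReal.ofReal (p / (p - 1)) * ∫⁻ x, φ x * f x ^ (p - 1) ∂μ := by
  set g : α → ℝ := fun x => (f x).toReal
  have hg_nn : 0 ≤ᵐ[μ.withDensity φ] g := ae_of_all _ fun _ => ENNReal.toReal_nonneg
  have hg : Measurable g := hf.ennreal_toReal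
  have hfg : ∀ s : ℝ, 0 ≤ s → ∀ x, ENNReal.ofReal (g x ^ s) = f x ^ s := fun s hs x => by
    rw [← ENNReal.ofReal_rpow_of_nonneg ENNReal.toReal_nonneg hs, ENNReal.ofReal_toReal (hf_top x)]
  have hlevel : ∀ t : ℝ, {x | t ≤ g x} = {x | ENNReal.ofReal t ≤ f x} := fun t => by
    ext x
    exact (ENNReal.ofReal_le_iff_le_toReal (hf_top x)).symm
  have hpow : ∀ t : ℝ, 0 < t →
      ENNReal.ofReal (t ^ (p - 1)) = ENNReal.ofReal t * ENNReal.ofReal (t ^ (p - 1 - 1)) :=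
    fun t ht => by
      rw [← ENNReal.ofReal_mul ht.le, ← Real.rpow_one_add' ht.le (by linarith)]
      ring_nf
  calc ∫⁻ x, f x ^ p ∂μ = ∫⁻ x, ENNReal.ofReal (g x ^ p) ∂μ := by
        simp_rw [hfg p (by linarith)]
    _ = ENNReal.ofReal p * ∫⁻ t in Ioi 0, μ {x | t ≤ g x} * ENNReal.ofReal (t ^ (p - 1)) :=
        lintegral_rpow_eq_lintegral_meas_le_mul μ (ae_of_all _ fun _ => ENNReal.toReal_nonneg)
          hg.aemeasurable (by linarith)
    _ ≤ ENNReal.ofReal p * ∫⁻ t in Ioi 0,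
          μ.withDensity φ {x | t ≤ g x} * ENNReal.ofReal (t ^ (p - 1 - 1)) := by
        gcongr ENNReal.ofReal p * ?_
        refine setLIntegral_mono' (measurableSet_Ioi (a := (0 : ℝ))) fun t ht => ?_
        rw [hpow t ht, ← mul_assoc, mul_comm _ (ENNReal.ofReal t), hlevel,
          withDensity_apply _ (measurableSet_le (measurable_const (a := ENNReal.ofReal t)) hf)]
        gcongr
        exact hweak _
    _ = ENNReal.ofReal p / ENNReal.ofReal (p - 1) *
          ∫⁻ x, ENNReal.ofReal (g x ^ (p - 1)) ∂μ.withDensity φ := by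
        rw [lintegral_rpow_eq_lintegral_meas_le_mul _ hg_nn hg.aemeasurable (by linarith),
          ← mul_assoc, ENNReal.div_mul_cancel (by simpa using hp) ENNReal.ofReal_ne_top]
    _ = ENNReal.ofReal (p / (p - 1)) * ∫⁻ x, φ x * f x ^ (p - 1) ∂μ := by
        rw [ENNReal.ofReal_div_of_pos (by linarith),
          lintegral_withDensity_eq_lintegral_mul _ hφ (hg.pow_const _).ennreal_ofReal]
        simp_rw [Pi.mul_apply, hfg (p - 1) (by linarith)]

end LayerCake

section Holder

variable {α : Type*} [MeasurableSpace α] {μ : Measure α}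

lemma lintegral_rpow_le_of_le_mul_lintegral_mul_rpow_sub_one {f φ : α → ℝ≥0∞}
    (hf : AEMeasurable f μ) (hφ : AEMeasurable φ μ) {p : ℝ} (hp : 1 < p) {c : ℝ≥0∞}
    (hfin : ∫⁻ x, f x ^ p ∂μ ≠ ⊤)
    (h : ∫⁻ x, f x ^ p ∂μ ≤ c * ∫⁻ x, φ x * f x ^ (p - 1) ∂μ) :
    ∫⁻ x, f x ^ p ∂μ ≤ c ^ p * ∫⁻ x, φ x ^ p ∂μ := by
  have hconj : p.HolderConjugate (p / (p - 1)) := .conjExponent hp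
  have hp0 : 0 < p := by linarith
  set X := ∫⁻ x, f x ^ p ∂μ
  set A := ∫⁻ x, φ x ^ p ∂μ
  rcases eq_or_ne X 0 with hX0 | hX0
  · simp [hX0]
  have hexp : ∫⁻ x, (f x ^ (p - 1)) ^ (p / (p - 1)) ∂μ = X := by
    refine lintegral_congr fun x => ?_
    rw [← ENNReal.rpow_mul, mul_div_cancel₀ _ (by linarith)]
  have hHolder : ∫⁻ x, φ x * f x ^ (p - 1) ∂μ ≤ A ^ (1 / p) * X ^ (1 / (p / (p - 1))) := by
    simpa only [Pi.mul_apply, hexp] using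
      ENNReal.lintegral_mul_le_Lp_mul_Lq μ hconj hφ (hf.pow_const (p - 1))
  have hsplit : X ^ (1 / p) * X ^ (1 / (p / (p - 1))) = X := by
    rw [← ENNReal.rpow_add_of_nonneg _ _ (by positivity) (by positivity), one_div, one_div,
      hconj.inv_add_inv_eq_one, ENNReal.rpow_one]
  have hroot : X ^ (1 / p) ≤ c * A ^ (1 / p) := by
    have hX' : X ^ (1 / (p / (p - 1))) ≠ 0 := by positivity
    have hX'' : X ^ (1 / (p / (p - 1))) ≠ ⊤ := ENNReal.rpow_ne_top_of_nonneg (by positivity) hfin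
    refine (ENNReal.mul_le_mul_iff_left hX' hX'').1 ?_
    calc X ^ (1 / p) * X ^ (1 / (p / (p - 1))) = X := hsplit
      _ ≤ c * (A ^ (1 / p) * X ^ (1 / (p / (p - 1)))) := h.trans (by gcongr)
      _ = c * A ^ (1 / p) * X ^ (1 / (p / (p - 1))) := (mul_assoc _ _ _).symm
  calc X = (X ^ (1 / p)) ^ p := by
        rw [← ENNReal.rpow_mul, one_div_mul_cancel hp0.ne', ENNReal.rpow_one]
    _ ≤ (c * A ^ (1 / p)) ^ p := by gcongr
    _ = c ^ p * A := by
      rw [ENNReal.mul_rpow_of_nonneg _ _ hp0.le, ← ENNReal.rpow_mul, one_div_mul_cancel hp0.ne',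
        ENNReal.rpow_one]

lemma lintegral_mul_le_of_lintegral_rpow_le {f g : α → ℝ≥0∞} (hf : AEMeasurable f μ)
    (hg : AEMeasurable g μ) {r : ℝ} (hr : 1 < r) {K : ℝ≥0∞}
    (h : ∫⁻ x, g x ^ (r / (r - 1)) ∂μ ≤ K * ∫⁻ x, f x ^ r ∂μ) :
    ∫⁻ x, f x * g x ∂μ ≤ K ^ ((r - 1) / r) * ∫⁻ x, f x ^ r ∂μ := by
  have hconj : r.HolderConjugate (r / (r - 1)) := .conjExponent hr
  have hr0 : 0 < r := by linarith
  have he : 1 / (r / (r - 1)) = (r - 1) / r := one_div_div _ _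
  have he0 : 0 ≤ (r - 1) / r := div_nonneg (by linarith) hr0.le
  set Y := ∫⁻ x, f x ^ r ∂μ
  calc ∫⁻ x, f x * g x ∂μ
      ≤ Y ^ (1 / r) * (∫⁻ x, g x ^ (r / (r - 1)) ∂μ) ^ ((r - 1) / r) := by
        simpa only [Pi.mul_apply, he] using ENNReal.lintegral_mul_le_Lp_mul_Lq μ hconj hf hg
    _ ≤ Y ^ (1 / r) * (K * Y) ^ ((r - 1) / r) := by gcongr
    _ = K ^ ((r - 1) / r) * Y ^ (1 / r + (r - 1) / r) := by
        rw [ENNReal.mul_rpow_of_nonneg _ _ he0,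
          ENNReal.rpow_add_of_nonneg _ _ (by positivity) he0]
        ring
    _ = K ^ ((r - 1) / r) * Y := by
        rw [← add_div, add_sub_cancel, div_self hr0.ne', ENNReal.rpow_one]

end Holder

section MaximalAverage

variable {α : Type*} [MeasurableSpace α] {μ : Measure α} {φ : α → ℝ≥0∞} {T : Finset (Set α)}

variable (μ φ T) in
/-- The dyadic maximal function `M_σ φ` of the paper, with the supremum restricted to the finite
family `T`. -/
noncomputable def maximalAverage : α → ℝ≥0∞ :=
  T.sup fun S => S.indicator fun _ => ⨍⁻ y in S, φ y ∂μ

lemma maximalAverage_apply (x : α) :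
    maximalAverage μ φ T x = T.sup fun S => S.indicator (fun _ => ⨍⁻ y in S, φ y ∂μ) x :=
  Finset.sup_apply _ _ _

lemma measurable_maximalAverage (hT : ∀ S ∈ T, MeasurableSet S) :
    Measurable (maximalAverage μ φ T) :=
  Finset.sup_induction measurable_const (fun _ hf _ hg => hf.sup hg)
    fun S hS => measurable_const.indicator (hT S hS)

lemma setLAverage_le_maximalAverage {S : Set α} (hS : S ∈ T) {x : α} (hx : x ∈ S) :
    ⨍⁻ y in S, φ y ∂μ ≤ maximalAverage μ φ T x := by
  rw [maximalAverage_apply, ← indicator_of_mem hx fun _ => ⨍⁻ y in S, φ y ∂μ]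
  exact Finset.le_sup (f := fun S => S.indicator (fun _ => ⨍⁻ y in S, φ y ∂μ) x) hS

lemma le_maximalAverage_iff {t : ℝ≥0∞} (ht : t ≠ 0) {x : α} :
    t ≤ maximalAverage μ φ T x ↔ ∃ S ∈ T, x ∈ S ∧ t ≤ ⨍⁻ y in S, φ y ∂μ := by
  rw [maximalAverage_apply, Finset.le_sup_iff (pos_iff_ne_zero.2 ht)]
  refine exists_congr fun S => and_congr_right fun _ => ?_
  by_cases hx : x ∈ S <;> simp [hx, ht]

lemma maximalAverage_le_indicator (x : α) :
    maximalAverage μ φ T x ≤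
      (⋃ S ∈ T, S).indicator (fun _ => T.sup fun S => ⨍⁻ y in S, φ y ∂μ) x := by
  rw [maximalAverage_apply]
  refine Finset.sup_le fun S hS => ?_
  by_cases hx : x ∈ S
  · rw [indicator_of_mem hx, indicator_of_mem (mem_iUnion₂_of_mem hS hx)]
    exact Finset.le_sup (f := fun S => ⨍⁻ y in S, φ y ∂μ) hS
  · simp [hx]

lemma mul_measure_le_setLIntegral_of_le_setLAverage {S : Set α} {t : ℝ≥0∞}
    (ht : t ≤ ⨍⁻ y in S, φ y ∂μ) : t * μ S ≤ ∫⁻ y in S, φ y ∂μ := by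
  rcases eq_or_ne (μ S) 0 with h0 | h0
  · simp [h0]
  rcases eq_or_ne (∫⁻ y in S, φ y ∂μ) ⊤ with htop | htop
  · simp [htop]
  rw [setLAverage_eq] at ht
  exact (ENNReal.le_div_iff_mul_le (Or.inl h0) (Or.inr htop)).1 ht

/-- The superlevel set is the disjoint union of the maximal members of the family with large
average. -/
lemma mul_measure_le_setLIntegral_maximalAverage (hT : ∀ S ∈ T, MeasurableSet S)
    (hlam : ∀ S ∈ T, ∀ S' ∈ T, S ⊆ S' ∨ S' ⊆ S ∨ Disjoint S S') (t : ℝ≥0∞) :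
    t * μ {x | t ≤ maximalAverage μ φ T x} ≤
      ∫⁻ x in {x | t ≤ maximalAverage μ φ T x}, φ x ∂μ := by
  classical
  rcases eq_or_ne t 0 with rfl | ht
  · simp
  set G := T.filter fun S => t ≤ ⨍⁻ y in S, φ y ∂μ
  set Gmax := G.filter fun S => Maximal (· ∈ G) S
  have hGmax : ∀ {S}, S ∈ Gmax ↔ (S ∈ T ∧ t ≤ ⨍⁻ y in S, φ y ∂μ) ∧ Maximal (· ∈ G) S := by
    simp only [Gmax, G, Finset.mem_filter, implies_true]
  have hset : {x | t ≤ maximalAverage μ φ T x} = ⋃ S ∈ Gmax, S := by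
    ext x
    simp only [mem_ofPred_eq, le_maximalAverage_iff ht, mem_iUnion₂, exists_prop]
    constructor
    · rintro ⟨S, hST, hxS, htS⟩
      obtain ⟨S', hSS', hmax⟩ := G.exists_le_maximal (Finset.mem_filter.2 ⟨hST, htS⟩)
      exact ⟨S', hGmax.2 ⟨Finset.mem_filter.1 hmax.prop, hmax⟩, hSS' hxS⟩
    · rintro ⟨S, hS, hxS⟩
      exact ⟨S, (hGmax.1 hS).1.1, hxS, (hGmax.1 hS).1.2⟩
  have hdisj : (Gmax : Set (Set α)).PairwiseDisjoint fun S => S := by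
    intro S hS S' hS' hne
    obtain ⟨⟨hST, -⟩, hSmax⟩ := hGmax.1 hS
    obtain ⟨⟨hS'T, -⟩, hS'max⟩ := hGmax.1 hS'
    rcases hlam S hST S' hS'T with h | h | h
    · exact absurd (hSmax.eq_of_le hS'max.prop h) hne
    · exact absurd (hS'max.eq_of_le hSmax.prop h).symm hne
    · exact h
  have hmeas : ∀ S ∈ Gmax, MeasurableSet S := fun S hS => hT S (hGmax.1 hS).1.1
  rw [hset, measure_biUnion_finset hdisj hmeas, lintegral_biUnion_finset hdisj hmeas,
    Finset.mul_sum]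
  exact Finset.sum_le_sum fun S hS =>
    mul_measure_le_setLIntegral_of_le_setLAverage (hGmax.1 hS).1.2

lemma lintegral_maximalAverage_rpow_le (hφ : Measurable φ) (hT : ∀ S ∈ T, MeasurableSet S)
    (hlam : ∀ S ∈ T, ∀ S' ∈ T, S ⊆ S' ∨ S' ⊆ S ∨ Disjoint S S')
    (hμT : ∀ S ∈ T, μ S ≠ ⊤) (hφT : ∀ S ∈ T, ∫⁻ x in S, φ x ∂μ ≠ ⊤) {p : ℝ} (hp : 1 < p) :
    ∫⁻ x, maximalAverage μ φ T x ^ p ∂μ ≤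
      ENNReal.ofReal (p / (p - 1)) ^ p * ∫⁻ x, φ x ^ p ∂μ := by
  have hp0 : 0 < p := by linarith
  have hM := measurable_maximalAverage (μ := μ) (φ := φ) hT
  have hbound := maximalAverage_le_indicator (μ := μ) (φ := φ) (T := T)
  set U := ⋃ S ∈ T, S
  set c := T.sup fun S => ⨍⁻ y in S, φ y ∂μ
  have hc : c ≠ ⊤ := by
    refine ((Finset.sup_lt_iff bot_lt_top).2 fun S hS => ?_).ne
    rw [setLAverage_eq]
    rcases eq_or_ne (μ S) 0 with h0 | h0
    · simp [setLIntegral_measure_zero _ _ h0]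
    · exact ENNReal.div_lt_top (hφT S hS) h0
  have hM_top : ∀ x, maximalAverage μ φ T x ≠ ⊤ := fun x =>
    ne_top_of_le_ne_top (by by_cases hx : x ∈ U <;> simp [hx, hc]) (hbound x)
  have hM_le : ∀ x, maximalAverage μ φ T x ^ p ≤ U.indicator (fun _ => c ^ p) x := fun x => by
    by_cases hx : x ∈ U
    · rw [indicator_of_mem hx]
      gcongr
      simpa [hx] using hbound x
    · have : maximalAverage μ φ T x = 0 := by
        simpa [hx] using hbound x
      simp [this, hx, hp0]
  have hfin : ∫⁻ x, maximalAverage μ φ T x ^ p ∂μ ≠ ⊤ := by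
    refine ne_top_of_le_ne_top ?_ (lintegral_mono hM_le)
    rw [lintegral_indicator_const (Finset.measurableSet_biUnion T hT)]
    refine ENNReal.mul_ne_top (ENNReal.rpow_ne_top_of_nonneg hp0.le hc) ?_
    exact ne_top_of_le_ne_top (ENNReal.sum_ne_top.2 hμT) (measure_biUnion_finset_le T _)
  exact lintegral_rpow_le_of_le_mul_lintegral_mul_rpow_sub_one hM.aemeasurable hφ.aemeasurable
    hp hfin (lintegral_rpow_le_mul_lintegral_mul_rpow_sub_one hM hφ hM_top hp
      (mul_measure_le_setLIntegral_maximalAverage hT hlam))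

end MaximalAverage

section DyadicSum

variable {n : ℕ} (σ : Measure (Fin n → ℝ)) (lam : DyadicCube n → ℝ≥0∞)

lemma measurable_dSum : Measurable (dSum lam) :=
  Measurable.tsum fun Q => measurable_const.indicator Q.measurableSet_toSet

lemma dSumIn_le_dSum (R : DyadicCube n) (x : Fin n → ℝ) : dSumIn lam R x ≤ dSum lam x :=
  ENNReal.tsum_comp_le_tsum_of_injective Subtype.val_injective
    fun Q : DyadicCube n => Q.toSet.indicator (fun _ => lam Q) x

lemma dSum_le_tsum (x : Fin n → ℝ) : dSum lam x ≤ ∑' Q, lam Q :=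
  ENNReal.tsum_le_tsum fun _ => indicator_le_self' (fun _ _ => bot_le) x

lemma lintegral_dSum_mul {g : (Fin n → ℝ) → ℝ≥0∞} (hg : Measurable g) :
    ∫⁻ x, dSum lam x * g x ∂σ = ∑' R, lam R * ∫⁻ x in R.toSet, g x ∂σ := by
  simp_rw [dSum, ← ENNReal.tsum_mul_right, ← indicator_mul_left]
  rw [lintegral_tsum fun R => ((hg.const_mul (lam R)).indicator R.measurableSet_toSet).aemeasurable]
  refine tsum_congr fun R => ?_
  rw [lintegral_indicator R.measurableSet_toSet, lintegral_const_mul _ hg]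

lemma tsum_le_lintegral_dSum_mul_maximalAverage (F : Finset (DyadicCube n))
    (hF : ∀ Q ∉ F, lam Q = 0) {q e : ℝ} (hq : 0 ≤ q) (he : 0 ≤ e) :
    ∑' R, lam R * σ R.toSet * ((σ R.toSet)⁻¹ * ∫⁻ x in R.toSet, dSumIn lam R x ^ q ∂σ) ^ e ≤
      ∫⁻ x, dSum lam x *
        maximalAverage σ (fun y => dSum lam y ^ q) (F.image DyadicCube.toSet) x ^ e ∂σ := by
  set M := maximalAverage σ (fun y => dSum lam y ^ q) (F.image DyadicCube.toSet)
  have hM : Measurable M := measurable_maximalAverage (by simp [DyadicCube.measurableSet_toSet])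
  rw [lintegral_dSum_mul σ lam (hM.pow_const e)]
  refine ENNReal.tsum_le_tsum fun R => ?_
  by_cases hR : R ∈ F
  swap
  · simp [hF R hR]
  rw [mul_assoc, mul_comm (σ R.toSet), ← setLIntegral_const]
  gcongr lam R * ?_
  refine setLIntegral_mono (hM.pow_const e) fun x hx => ?_
  gcongr
  calc (σ R.toSet)⁻¹ * ∫⁻ y in R.toSet, dSumIn lam R y ^ q ∂σ
      ≤ (σ R.toSet)⁻¹ * ∫⁻ y in R.toSet, dSum lam y ^ q ∂σ := by
        gcongr with y
        exact dSumIn_le_dSum lam R y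
    _ = ⨍⁻ y in R.toSet, dSum lam y ^ q ∂σ := by rw [setLAverage_eq, ENNReal.div_eq_inv_mul]
    _ ≤ M x := setLAverage_le_maximalAverage (Finset.mem_image_of_mem _ hR) hx

lemma lintegral_maximalAverage_dSum_rpow_le [IsLocallyFiniteMeasure σ]
    (hfin : (Function.support lam).Finite) (htop : ∀ Q, lam Q ≠ ⊤) (F : Finset (DyadicCube n))
    {q p : ℝ} (hq : 0 ≤ q) (hp : 1 < p) :
    ∫⁻ x, maximalAverage σ (fun y => dSum lam y ^ q) (F.image DyadicCube.toSet) x ^ p ∂σ ≤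
      ENNReal.ofReal (p / (p - 1)) ^ p * ∫⁻ x, (dSum lam x ^ q) ^ p ∂σ := by
  have hsum : ∑' Q, lam Q ≠ ⊤ := by
    rw [tsum_eq_sum (s := hfin.toFinset) (by simp)]
    exact ENNReal.sum_ne_top.2 fun Q _ => htop Q
  refine lintegral_maximalAverage_rpow_le ((measurable_dSum lam).pow_const q) ?_ ?_ ?_ ?_ hp
  · simp [DyadicCube.measurableSet_toSet]
  · simpa using fun Q _ R _ => Q.subset_or_subset_or_disjoint R
  · simpa using fun Q _ => (Q.measure_toSet_lt_top σ).ne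
  · simp only [Finset.mem_image, forall_exists_index, and_imp, forall_apply_eq_imp_iff₂]
    intro Q _
    refine ne_top_of_le_ne_top ?_ (setLIntegral_mono measurable_const fun x _ =>
      ENNReal.rpow_le_rpow (dSum_le_tsum lam x) hq)
    rw [setLIntegral_const]
    exact ENNReal.mul_ne_top (ENNReal.rpow_ne_top_of_nonneg hq hsum) (Q.measure_toSet_lt_top σ).ne

end DyadicSum

/-- Lemma 3.2(i), case `r ≥ 1`, `0 < q < r`:
`Σ_R λ_R σ(R) ((1/σ(R)) ∫_R (Σ_{Q⊆R} λ_Q χ_Q)^q dσ)^{(r-1)/q} ≤ C(r,q) ∫ (Σ_Q λ_Q χ_Q)^r dσ`. -/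
theorem a4_le_a1_ge_one (r q : ℝ) (hr : 1 ≤ r) (hq : 0 < q) (hqr : q < r) :
    ∃ C : ℝ≥0∞, C ≠ ⊤ ∧
      ∀ (n : ℕ) (σ : Measure (Fin n → ℝ)) [IsLocallyFiniteMeasure σ]
        (lam : DyadicCube n → ℝ≥0∞),
        (Function.support lam).Finite → (∀ Q, lam Q ≠ ⊤) →
        (∀ Q : DyadicCube n, σ Q.toSet = 0 → lam Q = 0) →
        (∑' R : DyadicCube n, lam R * σ R.toSet *
            ((σ R.toSet)⁻¹ * ∫⁻ x in R.toSet, (dSumIn lam R x) ^ q ∂σ) ^ ((r - 1) / q))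
          ≤ C * ∫⁻ x, (dSum lam x) ^ r ∂σ := by
  rcases hr.eq_or_lt with rfl | hr1
  · refine ⟨1, ENNReal.one_ne_top, fun n σ _ lam hfin _ _ => ?_⟩
    simpa using tsum_le_lintegral_dSum_mul_maximalAverage σ lam hfin.toFinset (by simp) hq.le
      (e := (1 - 1) / q) (by simp)
  set p := r / q
  have hp : 1 < p := (one_lt_div hq).2 hqr
  have hp0 : 0 < p := by linarith
  refine ⟨(ENNReal.ofReal (p / (p - 1)) ^ p) ^ ((r - 1) / r),
    ENNReal.rpow_ne_top_of_nonneg (by bound) (ENNReal.rpow_ne_top_of_nonneg hp0.le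
      ENNReal.ofReal_ne_top), fun n σ _ lam hfin htop _ => ?_⟩
  set F := hfin.toFinset
  set M := maximalAverage σ (fun y => dSum lam y ^ q) (F.image DyadicCube.toSet)
  have hM : Measurable M := measurable_maximalAverage (by simp [DyadicCube.measurableSet_toSet])
  refine (tsum_le_lintegral_dSum_mul_maximalAverage σ lam F (by simp [F]) hq.le
    (by bound)).trans (lintegral_mul_le_of_lintegral_rpow_le (measurable_dSum lam).aemeasurable
      (hM.pow_const _).aemeasurable hr1 ?_)
  calc ∫⁻ x, (M x ^ ((r - 1) / q)) ^ (r / (r - 1)) ∂σ = ∫⁻ x, M x ^ p ∂σ := by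
        simp_rw [← ENNReal.rpow_mul]
        congr! 3
        simp only [p]
        field_simp
    _ ≤ ENNReal.ofReal (p / (p - 1)) ^ p * ∫⁻ x, (dSum lam x ^ q) ^ p ∂σ :=
        lintegral_maximalAverage_dSum_rpow_le σ lam hfin htop F hq.le hp
    _ = ENNReal.ofReal (p / (p - 1)) ^ p * ∫⁻ x, dSum lam x ^ r ∂σ := by
        simp_rw [← ENNReal.rpow_mul, p, mul_div_cancel₀ _ hq.ne']
end
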